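/- arXiv:2601.11294 — 5 statements merged into one kernel-verified Lean document; each statement's English description precedes it below -/
import Mathlib

section
/- The set 𝒩(ℝ^d) of all finite Borel measures on ℝ^d of the form Σ_{j=1}^m δ_{x_j}, with m ∈ ℕ and x_1, …, x_m ∈ ℝ^d, is closed in the space of finite Borel measures on ℝ^d equipped with the weak topology. -/
/-!
Let `μ` be a weak limit of atomic measures. Near `μ` the mass, which for an atomic measure is its
number of atoms, stays below `μ.mass + 1`. Tightness of `μ` gives a compactly supported cutoff
`0 ≤ f ≤ 1` with `∫ (1 - f) dμ < 1`, and `∫ (1 - f) dν < 1` is an open condition on `ν`. For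
`ν = ∑ δ_{x_j}` it reads `∑ (1 - f (x_j)) < 1`, which forces every atom into the support of `f`.
So near `μ` all atomic measures lie in a finite union of continuous images of powers of a compact
set; this union is compact, hence closed, and it contains `μ`.
-/

open MeasureTheory

noncomputable section

/-- The Dirac mass at a point, as a finite measure. -/
def diracFM {X : Type*} [MeasurableSpace X] (x : X) : FiniteMeasure X :=
  ⟨Measure.dirac x, inferInstance⟩

open Metric Set BoundedContinuousFunction
open scoped NNReal

section

variable {X : Type*} [TopologicalSpace X] [MeasurableSpace X] [OpensMeasurableSpace X]
  {ι : Type*} [Fintype ι]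

lemma continuous_diracFM : Continuous (diracFM : X → FiniteMeasure X) :=
  ProbabilityMeasure.toFiniteMeasure_continuous.comp continuous_diracProba

lemma continuous_sum_diracFM : Continuous fun x : ι → X ↦ ∑ j, diracFM (x j) :=
  continuous_finsetSum _ fun j _ ↦ continuous_diracFM.comp (continuous_apply j)

lemma testAgainstNN_sum_diracFM (x : ι → X) (f : X →ᵇ ℝ≥0) :
    (∑ j, diracFM (x j)).testAgainstNN f = ∑ j, f (x j) := by
  rw [← ENNReal.coe_inj, FiniteMeasure.testAgainstNN_coe_eq, FiniteMeasure.toMeasure_sum,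
    lintegral_finsetSum_measure, ENNReal.ofNNReal_finsetSum]
  exact Finset.sum_congr rfl fun j _ ↦ lintegral_dirac' _ (by fun_prop)

lemma mass_sum_diracFM (x : ι → X) : (∑ j, diracFM (x j)).mass = Fintype.card ι := by
  simp [← FiniteMeasure.testAgainstNN_one, testAgainstNN_sum_diracFM]

lemma pos_apply_of_mass_sub_testAgainstNN_sum_diracFM_lt_one {f : X →ᵇ ℝ≥0}
    (hf : ∀ x, f x ≤ 1) (x : ι → X)
    (h : ((∑ j, diracFM (x j)).mass : ℝ) - (∑ j, diracFM (x j)).testAgainstNN f < 1) (j : ι) :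
    0 < f (x j) := by
  have hdefect : ∑ i, (1 - f (x i) : ℝ) < 1 := by
    simpa [mass_sum_diracFM, testAgainstNN_sum_diracFM, Finset.sum_sub_distrib] using h
  have hj : 1 - (f (x j) : ℝ) < 1 :=
    (Finset.single_le_sum (fun i _ ↦ sub_nonneg.2 (NNReal.coe_le_one.2 (hf (x i))))
      (Finset.mem_univ j)).trans_lt hdefect
  exact_mod_cast (sub_lt_self_iff 1).1 hj

omit [Fintype ι] in
lemma isCompact_biUnion_image_sum_diracFM {K : Set X} (hK : IsCompact K) (n : ℕ) :
    IsCompact (⋃ m < n, (fun x : Fin m → X ↦ ∑ j, diracFM (x j)) '' univ.pi fun _ ↦ K) :=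
  (finite_lt_nat n).isCompact_biUnion fun _ _ ↦
    (isCompact_univ_pi fun _ ↦ hK).image continuous_sum_diracFM

end

lemma MeasureTheory.FiniteMeasure.exists_isCompact_mass_sub_testAgainstNN_lt_one
    {X : Type*} [MetricSpace X] [ProperSpace X] [MeasurableSpace X] [BorelSpace X]
    (μ : FiniteMeasure X) :
    ∃ K : Set X, IsCompact K ∧ ∃ f : X →ᵇ ℝ≥0, (∀ x, f x ≤ 1) ∧ (∀ x, f x ≠ 0 → x ∈ K) ∧
      (μ.mass : ℝ) - μ.testAgainstNN f < 1 := by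
  obtain ⟨K, -, hK, hμK⟩ := MeasurableSet.univ.exists_isCompact_lt_add
    (measure_ne_top (μ : Measure X) univ) one_ne_zero
  refine ⟨cthickening 1 K, hK.cthickening, thickenedIndicator one_pos K,
    thickenedIndicator_le_one one_pos K, fun x hx ↦ ?_, ?_⟩
  · by_contra hxK
    exact hx (thickenedIndicator_zero one_pos K fun h ↦ hxK (thickening_subset_cthickening 1 K h))
  · have hmass : μ.mass < μ K + 1 := by
      rw [← ENNReal.coe_lt_coe, ENNReal.coe_add, FiniteMeasure.ennreal_coeFn_eq_coeFn_toMeasure,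
        FiniteMeasure.ennreal_mass]
      exact_mod_cast hμK
    have hK : μ K ≤ μ.testAgainstNN (thickenedIndicator one_pos K) := by
      rw [← ENNReal.coe_le_coe, FiniteMeasure.ennreal_coeFn_eq_coeFn_toMeasure,
        FiniteMeasure.testAgainstNN_coe_eq]
      exact measure_le_lintegral_thickenedIndicator _ hK.measurableSet one_pos
    rw [sub_lt_iff_lt_add']
    exact_mod_cast hmass.trans_le (add_le_add_left hK 1)

lemma isClosed_setOf_eq_sum_diracFM
    {X : Type*} [MetricSpace X] [ProperSpace X] [MeasurableSpace X] [BorelSpace X] :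
    IsClosed {μ : FiniteMeasure X | ∃ (m : ℕ) (x : Fin m → X), μ = ∑ j, diracFM (x j)} := by
  set N := {μ : FiniteMeasure X | ∃ (m : ℕ) (x : Fin m → X), μ = ∑ j, diracFM (x j)}
  refine isClosed_of_closure_subset fun μ hμ ↦ ?_
  obtain ⟨K, hK, f, hf1, hfK, hμf⟩ := μ.exists_isCompact_mass_sub_testAgainstNN_lt_one
  set V := {ν : FiniteMeasure X |
    (ν.mass : ℝ) < μ.mass + 1 ∧ (ν.mass : ℝ) - ν.testAgainstNN f < 1}
  have hV : IsOpen V := by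
    have hmass : Continuous fun ν : FiniteMeasure X ↦ (ν.mass : ℝ) :=
      NNReal.continuous_coe.comp FiniteMeasure.continuous_mass
    have hf : Continuous fun ν : FiniteMeasure X ↦ (ν.testAgainstNN f : ℝ) :=
      NNReal.continuous_coe.comp (FiniteMeasure.continuous_testAgainstNN_eval f)
    exact (isOpen_lt hmass continuous_const).inter (isOpen_lt (hmass.sub hf) continuous_const)
  set C := ⋃ m < ⌈(μ.mass : ℝ) + 1⌉₊,
    (fun x : Fin m → X ↦ ∑ j, diracFM (x j)) '' univ.pi fun _ ↦ K
  have hNV : N ∩ V ⊆ C := by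
    rintro _ ⟨⟨m, x, rfl⟩, hmass, hdefect⟩
    rw [mass_sum_diracFM, Fintype.card_fin] at hmass
    exact mem_biUnion (Nat.lt_ceil.2 hmass) ⟨x, fun j _ ↦ hfK _
      (pos_apply_of_mass_sub_testAgainstNN_sum_diracFM_lt_one hf1 x hdefect j).ne', rfl⟩
  have hμC : μ ∈ C := (isCompact_biUnion_image_sum_diracFM hK _).isClosed.closure_subset <|
    closure_mono hNV (hV.closure_inter ⟨hμ, lt_add_one _, hμf⟩)
  obtain ⟨m, -, x, -, hx⟩ := mem_iUnion₂.1 hμC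
  exact ⟨m, x, hx.symm⟩

/-- The set `𝒩(ℝ^d)` of finite Borel measures on `ℝ^d` of the form
`Σ_{j=1}^m δ_{x_j}` is closed in the space of finite Borel measures equipped with
the weak topology. -/
theorem atomic_measures_isClosed (d : ℕ) :
    IsClosed {μ : FiniteMeasure (EuclideanSpace ℝ (Fin d)) |
      ∃ (m : ℕ) (x : Fin m → EuclideanSpace ℝ (Fin d)), μ = ∑ j, diracFM (x j)} :=
  isClosed_setOf_eq_sum_diracFM
end
end

section
/- The set E is closed in the space of finite Borel measures on ℐ × ℝ^d equipped with the weak topology. -/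
open MeasureTheory

noncomputable section

/-- `ℐ` carries the discrete topology. -/
instance : TopologicalSpace (List ℕ) := ⊥
instance : DiscreteTopology (List ℕ) := ⟨rfl⟩
/-- Its Borel σ-algebra is the full power set. -/
instance : MeasurableSpace (List ℕ) := ⊤
instance : BorelSpace (List ℕ) := ⟨borel_eq_top_of_discrete.symm⟩

/-- `i ≺ j`: `i` is a strict prefix of `j`, i.e. `j = i ++ l` for some nonempty `l`. -/
def sPrefix (i j : List ℕ) : Prop := ∃ l : List ℕ, l ≠ [] ∧ j = i ++ l

/-- The set of admissible configurations. -/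
def Padm : Set (Finset (List ℕ)) := {V | ∀ i ∈ V, ∀ j ∈ V, ¬ sPrefix i j}

/-- The state space `E`, viewed inside the space of finite Borel measures on
`ℐ × ℝ^d`. -/
def E (d : ℕ) : Set (FiniteMeasure (List ℕ × EuclideanSpace ℝ (Fin d))) :=
  {μ | ∃ V ∈ Padm, ∃ x : List ℕ → EuclideanSpace ℝ (Fin d),
    μ = ∑ i ∈ V, diracFM (i, x i)}

/-!
Weak convergence is tested against bounded continuous functions, and since `ℐ` is discrete the
fibre of `μ` over `i` (the restriction to the clopen set `{i} × ℝ^d`, pushed forward to `ℝ^d`)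
depends continuously on `μ`. A finite measure lies in `E` exactly when every fibre is zero or a
Dirac mass and no two nonzero fibres lie over indices `i ≺ j`: the nonzero fibres are then
automatically finite in number, as each carries mass one. The fibres that are zero or Dirac form a
closed set, namely the `ν` of mass `0` or `1` with `∫ f² dν = (∫ f dν)²` for all bounded continuous
`f`: if `ν` is a probability measure, every such `f` has zero variance, hence is a.e. equal to its
value at a point `x` of the support, and for `f = min (dist · x) 1` this forces `ν = δ_x`.
-/

open Topology ProbabilityTheory
open scoped BoundedContinuousFunction NNReal ENNReal

lemma Continuous.apply_eq_of_ae_eq_of_mem_support {Y : Type*} [TopologicalSpace Y]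
    [MeasurableSpace Y] {μ : Measure Y} {f : Y → ℝ} (hf : Continuous f) {c : ℝ}
    (hfc : ∀ᵐ y ∂μ, f y = c) {x : Y} (hx : x ∈ μ.support) : f x = c := by
  by_contra hne
  have hU : {y | f y ≠ c} ∈ 𝓝 x := (isOpen_ne_fun hf continuous_const).mem_nhds hne
  exact ((Measure.mem_support_iff_forall x).mp hx _ hU).ne' (ae_iff.mp hfc)

lemma ae_eq_integral_of_integral_sq_eq {Y : Type*} [TopologicalSpace Y] [MeasurableSpace Y]
    [BorelSpace Y] (μ : Measure Y) [IsProbabilityMeasure μ] (f : Y →ᵇ ℝ)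
    (hf : ∫ y, f y ^ 2 ∂μ = (∫ y, f y ∂μ) ^ 2) : ∀ᵐ y ∂μ, f y = ∫ y, f y ∂μ := by
  have hf2 : MemLp f 2 μ := f.memLp_top.mono_exponent le_top
  refine ae_eq_integral_of_variance_eq_zero hf2 ?_
  simp [variance_eq_sub hf2, hf]

lemma exists_eq_dirac_of_integral_sq_eq {Y : Type*} [MetricSpace Y] [HereditarilyLindelofSpace Y]
    [MeasurableSpace Y] [BorelSpace Y] (μ : Measure Y) [IsProbabilityMeasure μ]
    (h : ∀ f : Y →ᵇ ℝ, ∫ y, f y ^ 2 ∂μ = (∫ y, f y ∂μ) ^ 2) : ∃ x, μ = Measure.dirac x := by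
  obtain ⟨x, hx⟩ := Measure.nonempty_support (IsProbabilityMeasure.ne_zero μ)
  let g : Y →ᵇ ℝ := .ofNormedAddCommGroup (fun y => min (dist y x) 1)
    ((continuous_id.dist continuous_const).min continuous_const) 1 fun y => by
      rw [Real.norm_of_nonneg (le_min dist_nonneg zero_le_one)]
      exact min_le_right _ _
  have hg := ae_eq_integral_of_integral_sq_eq μ g (h g)
  have hgx : g x = ∫ y, g y ∂μ := g.continuous.apply_eq_of_ae_eq_of_mem_support hg hx
  have hae : ∀ᵐ y ∂μ, y ∈ ({x} : Set Y) := by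
    filter_upwards [hg] with y hy
    have hgy : min (dist y x) 1 = 0 := by
      rw [← hgx] at hy
      simpa [g] using hy
    exact dist_eq_zero.mp ((min_eq_iff.mp hgy).resolve_right (by norm_num)).1
  have hx1 : μ {x} = 1 := (prob_compl_eq_zero_iff (measurableSet_singleton x)).mp hae
  refine ⟨x, ?_⟩
  rw [← Measure.restrict_eq_self_of_ae_mem hae, Measure.restrict_singleton, hx1, one_smul]

@[simp] lemma toMeasure_diracFM {X : Type*} [MeasurableSpace X] (x : X) :
    (diracFM x : Measure X) = Measure.dirac x := rfl

lemma mass_diracFM {X : Type*} [MeasurableSpace X] (x : X) : (diracFM x).mass = 1 := by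
  simp [FiniteMeasure.mass, FiniteMeasure.coeFn_def]

def diracOrZero (Y : Type*) [MeasurableSpace Y] : Set (FiniteMeasure Y) :=
  {ν | ν = 0 ∨ ∃ x, ν = diracFM x}

lemma isClosed_diracOrZero {Y : Type*} [MetricSpace Y] [HereditarilyLindelofSpace Y]
    [MeasurableSpace Y] [BorelSpace Y] : IsClosed (diracOrZero Y) := by
  have hD : diracOrZero Y = {ν : FiniteMeasure Y | ν.mass ∈ ({0, 1} : Set ℝ≥0)} ∩
      ⋂ f : Y →ᵇ ℝ, {ν | ∫ y, f y ^ 2 ∂ν = (∫ y, f y ∂ν) ^ 2} := by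
    ext ν
    simp only [diracOrZero, Set.mem_ofPred_eq, Set.mem_inter_iff, Set.mem_iInter,
      Set.mem_insert_iff, Set.mem_singleton_iff]
    constructor
    · rintro (rfl | ⟨x, rfl⟩)
      · simp
      · simp [mass_diracFM]
    · rintro ⟨hm | hm, hf⟩
      · exact .inl ((FiniteMeasure.mass_zero_iff ν).mp hm)
      · have : IsProbabilityMeasure (ν : Measure Y) :=
          ⟨by rw [← FiniteMeasure.ennreal_mass, hm, ENNReal.coe_one]⟩
        obtain ⟨x, hx⟩ := exists_eq_dirac_of_integral_sq_eq (ν : Measure Y) hf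
        exact .inr ⟨x, FiniteMeasure.toMeasure_injective hx⟩
  rw [hD]
  refine ((Set.toFinite _).isClosed.preimage FiniteMeasure.continuous_mass).inter
    (isClosed_iInter fun f => isClosed_eq ?_ ?_)
  · exact FiniteMeasure.continuous_integral_boundedContinuousFunction (f ^ 2)
  · exact (FiniteMeasure.continuous_integral_boundedContinuousFunction f).pow 2

namespace MeasureTheory.FiniteMeasure

lemma continuous_restrict_of_isClopen {Ω : Type*} [MeasurableSpace Ω] [TopologicalSpace Ω]
    [OpensMeasurableSpace Ω] {s : Set Ω} (hs : IsClopen s) :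
    Continuous fun μ : FiniteMeasure Ω => μ.restrict s := by
  rw [continuous_iff_forall_continuous_integral]
  intro f
  have h : ∀ μ : FiniteMeasure Ω,
      ∫ x, f x ∂(μ.restrict s) = ∫ x, (BoundedContinuousFunction.indicator s hs * f) x ∂μ := by
    intro μ
    rw [restrict_measure_eq, ← integral_indicator hs.isOpen.measurableSet]
    congr 1 with x
    by_cases hx : x ∈ s <;> simp [hx]
  simp_rw [h]
  exact continuous_integral_boundedContinuousFunction _

variable {ι Y : Type*} [MeasurableSpace ι] [MeasurableSpace Y]

def fiber (μ : FiniteMeasure (ι × Y)) (i : ι) : FiniteMeasure Y :=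
  (μ.restrict ({i} ×ˢ Set.univ)).map Prod.snd

lemma continuous_fiber [TopologicalSpace ι] [DiscreteTopology ι] [TopologicalSpace Y]
    [OpensMeasurableSpace (ι × Y)] [BorelSpace Y] (i : ι) :
    Continuous fun μ : FiniteMeasure (ι × Y) => μ.fiber i :=
  (continuous_map continuous_snd).comp
    (continuous_restrict_of_isClopen ((isClopen_discrete {i}).prod isClopen_univ))

lemma toMeasure_fiber_apply (μ : FiniteMeasure (ι × Y)) (i : ι) {s : Set Y}
    (hs : MeasurableSet s) : (μ.fiber i : Measure Y) s = (μ : Measure (ι × Y)) ({i} ×ˢ s) := by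
  rw [fiber, toMeasure_map, Measure.map_apply measurable_snd hs, restrict_measure_eq,
    Measure.restrict_apply (measurable_snd hs)]
  congr 1 with ⟨j, y⟩
  simp [and_comm]

lemma map_fiber (μ : FiniteMeasure (ι × Y)) (i : ι) :
    (μ.fiber i : Measure Y).map (Prod.mk i) = (μ : Measure (ι × Y)).restrict ({i} ×ˢ Set.univ) := by
  ext A hA
  rw [Measure.map_apply measurable_prodMk_left hA,
    toMeasure_fiber_apply _ _ (measurable_prodMk_left hA), Measure.restrict_apply hA]
  congr 1 with ⟨j, y⟩
  simp only [Set.mem_prod, Set.mem_singleton_iff, Set.mem_preimage, Set.mem_inter_iff,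
    Set.mem_univ, and_true]
  aesop

variable [MeasurableSingletonClass ι]

lemma ext_of_fiber [Countable ι] {μ ν : FiniteMeasure (ι × Y)} (h : ∀ i, μ.fiber i = ν.fiber i) :
    μ = ν := by
  have hsum : ∀ μ : FiniteMeasure (ι × Y),
      (μ : Measure (ι × Y)) = Measure.sum fun i => (μ.fiber i : Measure Y).map (Prod.mk i) := by
    intro μ
    simp_rw [map_fiber]
    rw [← Measure.restrict_iUnion, ← Set.iUnion_prod_const, Set.iUnion_of_singleton,
      Set.univ_prod_univ, Measure.restrict_univ]
    · exact fun i j hij => Set.disjoint_prod.mpr (.inl (Set.disjoint_singleton.mpr hij))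
    · exact fun i => (measurableSet_singleton i).prod .univ
  exact toMeasure_injective (by rw [hsum μ, hsum ν]; simp_rw [h])

lemma finite_setOf_le_mass_fiber (μ : FiniteMeasure (ι × Y)) {ε : ℝ≥0} (hε : 0 < ε) :
    {i | ε ≤ (μ.fiber i).mass}.Finite := by
  have h := Measure.finite_const_le_meas_of_disjoint_iUnion (μ : Measure (ι × Y))
    (ENNReal.coe_pos.mpr hε) (As := fun i => {i} ×ˢ Set.univ)
    (fun i => (measurableSet_singleton i).prod .univ)
    (fun i j hij => Set.disjoint_prod.mpr (.inl (Set.disjoint_singleton.mpr hij)))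
    (measure_ne_top _ _)
  convert h using 3 with i
  rw [← ENNReal.coe_le_coe, ennreal_mass, toMeasure_fiber_apply _ _ .univ]

variable [DecidableEq ι]

lemma fiber_sum_diracFM (V : Finset ι) (x : ι → Y) (i : ι) :
    (∑ k ∈ V, diracFM (k, x k)).fiber i = if i ∈ V then diracFM (x i) else 0 := by
  apply toMeasure_injective
  ext s hs
  rw [toMeasure_fiber_apply _ _ hs, toMeasure_sum, Measure.finsetSum_apply]
  simp only [toMeasure_diracFM, Measure.dirac_apply' _ ((measurableSet_singleton i).prod hs)]
  split_ifs with hi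
  · rw [Finset.sum_eq_single_of_mem i hi fun k _ hk => Set.indicator_of_notMem (by simp [hk]) _]
    by_cases hxi : x i ∈ s <;> simp [Measure.dirac_apply' _ hs, hxi]
  · rw [toMeasure_zero, Measure.coe_zero, Pi.zero_apply]
    exact Finset.sum_eq_zero fun k hk =>
      Set.indicator_of_notMem (by simp [ne_of_mem_of_not_mem hk hi]) _

lemma eq_sum_diracFM_iff [Countable ι] (μ : FiniteMeasure (ι × Y)) (V : Finset ι) (x : ι → Y) :
    μ = ∑ k ∈ V, diracFM (k, x k) ↔ ∀ i, μ.fiber i = if i ∈ V then diracFM (x i) else 0 :=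
  ⟨fun h i => h ▸ fiber_sum_diracFM V x i,
    fun h => ext_of_fiber fun i => (h i).trans (fiber_sum_diracFM V x i).symm⟩

end MeasureTheory.FiniteMeasure

open FiniteMeasure in
lemma E_eq_setOf_fiber (d : ℕ) : E d =
    {μ | ∀ i, μ.fiber i ∈ diracOrZero _} ∩
      {μ | ∀ i j, sPrefix i j → μ.fiber i = 0 ∨ μ.fiber j = 0} := by
  ext μ
  constructor
  · rintro ⟨V, hV, x, hμ⟩
    rw [eq_sum_diracFM_iff] at hμ
    refine ⟨fun i => ?_, fun i j hij => ?_⟩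
    · rw [hμ i]
      split_ifs
      exacts [.inr ⟨x i, rfl⟩, .inl rfl]
    · rw [hμ i, hμ j]
      by_cases hi : i ∈ V
      · by_cases hj : j ∈ V
        · exact absurd hij (hV i hi j hj)
        · simp [hj]
      · simp [hi]
  · rintro ⟨hD, hpre⟩
    have hx : ∀ i, ∃ x, μ.fiber i ≠ 0 → μ.fiber i = diracFM x := fun i =>
      (hD i).elim (fun h => ⟨0, fun h' => absurd h h'⟩) fun ⟨x, hx⟩ => ⟨x, fun _ => hx⟩
    choose x hx using hx
    have hfin : {i | μ.fiber i ≠ 0}.Finite :=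
      (μ.finite_setOf_le_mass_fiber one_pos).subset fun i hi => by
        rw [Set.mem_ofPred_eq, hx i hi, mass_diracFM]
    refine ⟨hfin.toFinset, fun i hi j hj hij => ?_, x, (eq_sum_diracFM_iff ..).mpr fun i => ?_⟩
    · rw [Set.Finite.mem_toFinset] at hi hj
      exact (hpre i j hij).elim hi hj
    · by_cases hi : μ.fiber i = 0
      · simp [hi]
      · simp [hx i hi]

/-- `E` is closed in the space of finite Borel measures on `ℐ × ℝ^d` equipped with
the weak topology. -/
theorem E_isClosed (d : ℕ) : IsClosed (E d) := by
  rw [E_eq_setOf_fiber]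
  simp only [Set.ofPred_forall]
  refine (isClosed_iInter fun i =>
    isClosed_diracOrZero.preimage (FiniteMeasure.continuous_fiber i)).inter
    (isClosed_iInter fun i => isClosed_iInter fun j => isClosed_iInter fun _ => ?_)
  exact (isClosed_eq (FiniteMeasure.continuous_fiber i) continuous_const).union
    (isClosed_eq (FiniteMeasure.continuous_fiber j) continuous_const)
end
end

section
/- If λ_n = Σ_{i∈V_n} δ_{(i, x_{i,n})} is a sequence in E converging in the weak topology of finite Borel measures on ℐ × ℝ^d to λ = Σ_{i∈V} δ_{(i, x_i)} ∈ E, then there exists N ∈ ℕ such that V_n = V for all n ≥ N, and x_{i,n} → x_i in ℝ^d for every i ∈ V. -/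
/-!
Testing weak convergence against a bounded continuous `f` turns it into convergence of the
finite sums `∑_{i ∈ V_n} f (i, x_{i,n})`. The constant `1` gives `#V_n → #V`, hence eventually
`#V_n = #V`. Since `ℐ` is discrete, `(j, y) ↦ 𝟙[j = i] ψ y` is a test function; with `ψ = 1` it
shows that every `i ∈ V` eventually lies in `V_n`, so eventually `V_n = V`, and for general `ψ`
it gives `ψ (x_{i,n}) → ψ (x_i)`, which for `ψ = min (dist · x_i) ε` is `x_{i,n} → x_i`.
-/

open MeasureTheory Filter

noncomputable section

open BoundedContinuousFunction Finset Topology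

section DiracSums

variable {X ι : Type*} [MeasurableSpace X] [TopologicalSpace X] [OpensMeasurableSpace X]
  [MeasurableSingletonClass X]

lemma integral_sum_diracFM (s : Finset ι) (p : ι → X) (f : X →ᵇ ℝ) :
    ∫ y, f y ∂((∑ i ∈ s, diracFM (p i) : FiniteMeasure X) : Measure X) = ∑ i ∈ s, f (p i) := by
  rw [FiniteMeasure.toMeasure_sum, integral_finsetSum_measure fun i _ => f.integrable _]
  exact sum_congr rfl fun i _ => integral_dirac f (p i)

lemma tendsto_sum_apply_of_tendsto_sum_diracFM {α κ : Type*} {l : Filter α}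
    {s : α → Finset ι} {p : α → ι → X} {t : Finset κ} {q : κ → X}
    (h : Tendsto (fun n => ∑ i ∈ s n, diracFM (p n i)) l (𝓝 (∑ i ∈ t, diracFM (q i))))
    (f : X →ᵇ ℝ) :
    Tendsto (fun n => ∑ i ∈ s n, f (p n i)) l (𝓝 (∑ i ∈ t, f (q i))) := by
  simpa only [integral_sum_diracFM] using FiniteMeasure.tendsto_iff_forall_integral_tendsto.mp h f

end DiracSums

lemma eventually_eq_of_tendsto_natCast {α : Type*} {l : Filter α} {u : α → ℕ} {k : ℕ}
    (h : Tendsto (fun n => (u n : ℝ)) l (𝓝 (k : ℝ))) : ∀ᶠ n in l, u n = k := by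
  rw [← Function.comp_def, ← Nat.isClosedEmbedding_coe_real.isEmbedding.tendsto_nhds_iff,
    nhds_discrete, tendsto_pure] at h
  exact h

lemma tendsto_of_forall_tendsto_comp_bcf {Y α : Type*} [PseudoMetricSpace Y] {l : Filter α}
    {u : α → Y} {y : Y} (h : ∀ ψ : Y →ᵇ ℝ, Tendsto (fun n => ψ (u n)) l (𝓝 (ψ y))) :
    Tendsto u l (𝓝 y) := by
  rw [Metric.tendsto_nhds]
  intro ε hε
  let ψ : Y →ᵇ ℝ := ofNormedAddCommGroup (fun z => min (dist z y) ε)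
    ((continuous_id.dist continuous_const).min continuous_const) ε fun z => by
      rw [Real.norm_of_nonneg (le_min dist_nonneg hε.le)]; exact min_le_right _ _
  have hψ : Tendsto (fun n => min (dist (u n) y) ε) l (𝓝 0) := by
    simpa [ψ, hε.le] using h ψ
  filter_upwards [hψ.eventually (gt_mem_nhds hε)] with n hn
  simpa using hn

section Configurations

variable {I Y α : Type*} [TopologicalSpace I] [TopologicalSpace Y] {l : Filter α}
  {Vn : α → Finset I} {xn : α → I → Y} {V : Finset I} {x : I → Y}

lemma eventually_card_eq_of_tendsto_sum
    (H : ∀ f : I × Y →ᵇ ℝ,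
      Tendsto (fun n => ∑ i ∈ Vn n, f (i, xn n i)) l (𝓝 (∑ i ∈ V, f (i, x i)))) :
    ∀ᶠ n in l, #(Vn n) = #V :=
  eventually_eq_of_tendsto_natCast <| by simpa using H (const _ 1)

variable [DiscreteTopology I] [DecidableEq I]

def indicatorFst (i : I) (ψ : Y →ᵇ ℝ) : I × Y →ᵇ ℝ :=
  ofNormedAddCommGroup (fun p => if p.1 = i then ψ p.2 else 0)
    (continuous_prod_of_discrete_left.mpr fun j => by
      by_cases hj : j = i <;> simp only [hj, if_true, if_false] <;> fun_prop)
    ‖ψ‖ fun p => by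
      split_ifs
      · exact ψ.norm_coe_le_norm p.2
      · simp

lemma sum_indicatorFst_apply (i : I) (ψ : Y →ᵇ ℝ) (s : Finset I) (x : I → Y) :
    ∑ j ∈ s, indicatorFst i ψ (j, x j) = if i ∈ s then ψ (x i) else 0 :=
  sum_ite_eq' s i fun j => ψ (x j)

lemma tendsto_ite_mem_of_tendsto_sum
    (H : ∀ f : I × Y →ᵇ ℝ,
      Tendsto (fun n => ∑ i ∈ Vn n, f (i, xn n i)) l (𝓝 (∑ i ∈ V, f (i, x i))))
    (i : I) (ψ : Y →ᵇ ℝ) :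
    Tendsto (fun n => if i ∈ Vn n then ψ (xn n i) else 0) l
      (𝓝 (if i ∈ V then ψ (x i) else 0)) := by
  simpa only [sum_indicatorFst_apply] using H (indicatorFst i ψ)

lemma eventually_mem_of_tendsto_sum
    (H : ∀ f : I × Y →ᵇ ℝ,
      Tendsto (fun n => ∑ i ∈ Vn n, f (i, xn n i)) l (𝓝 (∑ i ∈ V, f (i, x i))))
    {i : I} (hi : i ∈ V) : ∀ᶠ n in l, i ∈ Vn n := by
  have h := tendsto_ite_mem_of_tendsto_sum H i (const _ 1)
  simp only [const_apply, hi, if_true] at h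
  filter_upwards [h.eventually (lt_mem_nhds one_half_lt_one)] with n hn
  by_contra hni
  norm_num [hni] at hn

lemma eventually_eq_of_tendsto_sum
    (H : ∀ f : I × Y →ᵇ ℝ,
      Tendsto (fun n => ∑ i ∈ Vn n, f (i, xn n i)) l (𝓝 (∑ i ∈ V, f (i, x i)))) :
    ∀ᶠ n in l, Vn n = V := by
  have hsub : ∀ᶠ n in l, V ⊆ Vn n := by
    simpa only [subset_iff, eventually_all_finset] using
      fun i hi => eventually_mem_of_tendsto_sum H hi
  filter_upwards [hsub, eventually_card_eq_of_tendsto_sum H] with n hsub hcard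
  exact (eq_of_subset_of_card_le hsub hcard.le).symm

end Configurations

lemma tendsto_of_tendsto_sum {I Y α : Type*} [TopologicalSpace I] [DiscreteTopology I]
    [DecidableEq I] [PseudoMetricSpace Y] {l : Filter α} {Vn : α → Finset I} {xn : α → I → Y}
    {V : Finset I} {x : I → Y}
    (H : ∀ f : I × Y →ᵇ ℝ,
      Tendsto (fun n => ∑ i ∈ Vn n, f (i, xn n i)) l (𝓝 (∑ i ∈ V, f (i, x i))))
    {i : I} (hi : i ∈ V) : Tendsto (fun n => xn n i) l (𝓝 (x i)) := by
  refine tendsto_of_forall_tendsto_comp_bcf fun ψ => ?_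
  have h := tendsto_ite_mem_of_tendsto_sum H i ψ
  rw [if_pos hi] at h
  refine h.congr' ?_
  filter_upwards [eventually_mem_of_tendsto_sum H hi] with n hn
  rw [if_pos hn]

theorem weak_convergence_in_E_general (d : ℕ)
    (Vn : ℕ → Finset (List ℕ))
    (xn : ℕ → List ℕ → EuclideanSpace ℝ (Fin d))
    (V : Finset (List ℕ))
    (x : List ℕ → EuclideanSpace ℝ (Fin d))
    (hconv : Tendsto
      (fun n => ∑ i ∈ Vn n, diracFM ((i, xn n i) : List ℕ × EuclideanSpace ℝ (Fin d)))
      atTop (nhds (∑ i ∈ V, diracFM ((i, x i) : List ℕ × EuclideanSpace ℝ (Fin d))))) :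
    (∃ N : ℕ, ∀ n ≥ N, Vn n = V) ∧
    ∀ i ∈ V, Tendsto (fun n => xn n i) atTop (nhds (x i)) := by
  have H := tendsto_sum_apply_of_tendsto_sum_diracFM hconv
  exact ⟨eventually_atTop.mp (eventually_eq_of_tendsto_sum H),
    fun i hi => tendsto_of_tendsto_sum H hi⟩

/-- If `λ_n = Σ_{i∈V_n} δ_{(i,x_{i,n})}` is a sequence in `E` converging in the weak
topology of finite Borel measures on `ℐ × ℝ^d` to `λ = Σ_{i∈V} δ_{(i,x_i)} ∈ E`,
then the configurations stabilize (`V_n = V` for all large `n`) and the positions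
converge: `x_{i,n} → x_i` for every `i ∈ V`. -/
theorem weak_convergence_in_E (d : ℕ)
    (Vn : ℕ → Finset (List ℕ)) (hVn : ∀ n, Vn n ∈ Padm)
    (xn : ℕ → List ℕ → EuclideanSpace ℝ (Fin d))
    (V : Finset (List ℕ)) (hV : V ∈ Padm)
    (x : List ℕ → EuclideanSpace ℝ (Fin d))
    (hconv : Tendsto
      (fun n => ∑ i ∈ Vn n, diracFM ((i, xn n i) : List ℕ × EuclideanSpace ℝ (Fin d)))
      atTop (nhds (∑ i ∈ V, diracFM ((i, x i) : List ℕ × EuclideanSpace ℝ (Fin d))))) :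
    (∃ N : ℕ, ∀ n ≥ N, Vn n = V) ∧
    ∀ i ∈ V, Tendsto (fun n => xn n i) atTop (nhds (x i)) :=
  weak_convergence_in_E_general d Vn xn V x hconv
end
end

section
/- Let m ≥ 1 and x, y ∈ (ℝ^d)^m. Suppose that for each index i ∈ {1,…,m} we are given γ_i ∈ [0, C_γ] and nonnegative reals (p_{i,k})_{k≥0} with Σ_{k≥0} p_{i,k} = 1 and Σ_{k≥1} k p_{i,k} ≤ C¹. Then the double series is absolutely convergent and Σ_{i=1}^m γ_i Σ_{k≥0} ( ‖𝔢^i_k(x) − 𝔢^i_k(y)‖² − ‖x − y‖² ) p_{i,k} ≤ C_γ C¹ ‖x − y‖². -/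
/-!
Duplicating the `i`-th block `k` times changes the squared norm by exactly `(k - 1) ‖z_i‖²`, and
`dup i k` commutes with subtraction. Hence the inner series is
`Σ_k (k - 1) p_{i,k} ‖x_i - y_i‖² = (mean_i - 1) ‖x_i - y_i‖²`, a difference of the mean series
and the total mass (real, hence absolutely convergent). Weighting by `γ_i ≤ C_γ`, bounding
`mean_i - 1 ≤ C¹` and summing over `i` gives `C_γ C¹ ‖x - y‖²`.
-/

noncomputable section

/-- `(ℝ^d)^m` with its Euclidean (L²) norm. -/
abbrev Vec (d m : ℕ) := PiLp 2 (fun _ : Fin m => EuclideanSpace ℝ (Fin d))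

/-- The duplication map `𝔢^i_k : (ℝ^d)^m → (ℝ^d)^{m−1+k}` replacing the `i`-th
coordinate by `k` consecutive copies of itself (deleting it if `k = 0`). -/
def dup {d m : ℕ} (i : Fin m) (k : ℕ) (x : Vec d m) : Vec d (m - 1 + k) := WithLp.toLp 2 fun j =>
  if h1 : (j : ℕ) < (i : ℕ) then x ⟨j, lt_trans h1 i.isLt⟩
  else if h2 : (j : ℕ) < (i : ℕ) + k then x i
  else x ⟨(j : ℕ) - k + 1, by
    have hj := j.isLt
    have hi := i.isLt
    omega⟩

open Finset

-- `F i` is added on both sides so that the identity needs no subtraction.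
lemma sum_range_duplicate {M : Type*} [AddCommMonoid M] (F : ℕ → M) {i m : ℕ} (hi : i < m)
    (k : ℕ) :
    ∑ j ∈ range (m - 1 + k), (if j < i then F j else if j < i + k then F i else F (j - k + 1)) +
      F i = ∑ j ∈ range m, F j + k • F i := by
  have hfront : ∑ j ∈ range i, (if j < i then F j else if j < i + k then F i else F (j - k + 1))
      = ∑ j ∈ range i, F j :=
    sum_congr rfl fun j hj => if_pos (mem_range.1 hj)
  have hblock : ∑ j ∈ Ico i (i + k),
      (if j < i then F j else if j < i + k then F i else F (j - k + 1)) = k • F i := by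
    rw [sum_congr rfl (g := fun _ => F i) fun j hj => by
      rw [mem_Ico] at hj; rw [if_neg (by omega), if_pos hj.2]]
    rw [sum_const, Nat.card_Ico, Nat.add_sub_cancel_left]
  have hback : ∑ j ∈ Ico (i + k) (m - 1 + k),
      (if j < i then F j else if j < i + k then F i else F (j - k + 1)) =
      ∑ j ∈ Ico (i + 1) m, F j := by
    obtain ⟨n, rfl⟩ : ∃ n, m = n + 1 := ⟨m - 1, by omega⟩
    rw [Nat.add_sub_cancel, ← sum_Ico_add', ← sum_Ico_add']
    refine sum_congr rfl fun j hj => ?_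
    rw [mem_Ico] at hj
    rw [if_neg (by omega), if_neg (by omega), Nat.add_sub_cancel]
  rw [← sum_range_add_sum_Ico _ (by omega : i + k ≤ m - 1 + k),
    ← sum_range_add_sum_Ico _ (Nat.le_add_right i k), hfront, hblock, hback,
    ← sum_range_add_sum_Ico _ (by omega : i + 1 ≤ m), sum_range_succ]
  abel

lemma dup_sub {d m : ℕ} (i : Fin m) (k : ℕ) (x y : Vec d m) :
    dup i k x - dup i k y = dup i k (x - y) := by
  ext j : 1
  simp only [dup, PiLp.sub_apply, PiLp.toLp_apply]
  split_ifs <;> rfl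

lemma norm_sq_dup {d m : ℕ} (i : Fin m) (k : ℕ) (z : Vec d m) :
    ‖dup i k z‖ ^ 2 = ‖z‖ ^ 2 + ((k : ℝ) - 1) * ‖z i‖ ^ 2 := by
  set F : ℕ → ℝ := fun j => if h : j < m then ‖z ⟨j, h⟩‖ ^ 2 else 0
  have hFi : F i = ‖z i‖ ^ 2 := dif_pos i.isLt
  have hz : ‖z‖ ^ 2 = ∑ j ∈ range m, F j := by
    rw [PiLp.norm_sq_eq_of_L2, ← Fin.sum_univ_eq_sum_range]
    exact sum_congr rfl fun j _ => by simp [F, j.isLt]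
  have hdup : ‖dup i k z‖ ^ 2 = ∑ j ∈ range (m - 1 + k),
      (if j < i then F j else if j < i + k then F i else F (j - k + 1)) := by
    rw [PiLp.norm_sq_eq_of_L2, ← Fin.sum_univ_eq_sum_range]
    refine sum_congr rfl fun j _ => ?_
    have := j.isLt
    have := i.isLt
    simp only [dup, PiLp.toLp_apply, F]
    split_ifs <;> first | rfl | omega
  have key := sum_range_duplicate F i.isLt k
  rw [← hdup, ← hz, hFi, nsmul_eq_mul] at key
  linarith

lemma norm_sq_dup_sub_sub {d m : ℕ} (i : Fin m) (k : ℕ) (x y : Vec d m) :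
    ‖dup i k x - dup i k y‖ ^ 2 - ‖x - y‖ ^ 2 = ((k : ℝ) - 1) * ‖(x - y) i‖ ^ 2 := by
  rw [dup_sub, norm_sq_dup]
  ring

lemma hasSum_sub_one_mul {p : ℕ → ℝ} (hp1 : HasSum p 1)
    (hmom : Summable fun k : ℕ => (k : ℝ) * p k) :
    HasSum (fun k : ℕ => ((k : ℝ) - 1) * p k) ((∑' k : ℕ, (k : ℝ) * p k) - 1) := by
  simpa only [sub_mul, one_mul] using hmom.hasSum.sub hp1

theorem branching_sq_bound_general (d m : ℕ) (x y : Vec d m)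
    (Cγ C1 : ℝ)
    (γ : Fin m → ℝ) (hγ : ∀ i, γ i ∈ Set.Icc (0 : ℝ) Cγ)
    (p : Fin m → ℕ → ℝ) (hp : ∀ i k, 0 ≤ p i k)
    (hp1 : ∀ i, HasSum (p i) 1)
    (hmom : ∀ i, Summable (fun (k : ℕ) => (k : ℝ) * p i k))
    (hmom1 : ∀ i, ∑' (k : ℕ), (k : ℝ) * p i k ≤ C1) :
    (∀ i, Summable (fun k => |(‖dup i k x - dup i k y‖ ^ 2 - ‖x - y‖ ^ 2) * p i k|)) ∧
    ∑ i, γ i * ∑' k, (‖dup i k x - dup i k y‖ ^ 2 - ‖x - y‖ ^ 2) * p i k ≤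
      Cγ * C1 * ‖x - y‖ ^ 2 := by
  have hterm (i : Fin m) : HasSum (fun k => (‖dup i k x - dup i k y‖ ^ 2 - ‖x - y‖ ^ 2) * p i k)
      (((∑' k : ℕ, (k : ℝ) * p i k) - 1) * ‖(x - y) i‖ ^ 2) := by
    simp_rw [norm_sq_dup_sub_sub, mul_right_comm _ (‖(x - y) i‖ ^ 2)]
    exact (hasSum_sub_one_mul (hp1 i) (hmom i)).mul_right _
  refine ⟨fun i => (hterm i).summable.abs, ?_⟩
  have hbound (i : Fin m) : γ i * ((∑' k : ℕ, (k : ℝ) * p i k) - 1) ≤ Cγ * C1 := by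
    obtain ⟨hγ0, hγC⟩ := hγ i
    have hμ0 : 0 ≤ ∑' k : ℕ, (k : ℝ) * p i k :=
      tsum_nonneg fun k => mul_nonneg k.cast_nonneg (hp i k)
    calc γ i * ((∑' k : ℕ, (k : ℝ) * p i k) - 1) ≤ γ i * ∑' k : ℕ, (k : ℝ) * p i k :=
          mul_le_mul_of_nonneg_left (by linarith) hγ0
      _ ≤ Cγ * C1 := mul_le_mul hγC (hmom1 i) hμ0 (hγ0.trans hγC)
  calc ∑ i, γ i * ∑' k, (‖dup i k x - dup i k y‖ ^ 2 - ‖x - y‖ ^ 2) * p i k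
      = ∑ i, γ i * ((∑' k : ℕ, (k : ℝ) * p i k) - 1) * ‖(x - y) i‖ ^ 2 := by
        simp_rw [(hterm _).tsum_eq, mul_assoc]
    _ ≤ ∑ i, Cγ * C1 * ‖(x - y) i‖ ^ 2 :=
        sum_le_sum fun i _ => mul_le_mul_of_nonneg_right (hbound i) (sq_nonneg _)
    _ = Cγ * C1 * ‖x - y‖ ^ 2 := by rw [← mul_sum, PiLp.norm_sq_eq_of_L2]

/-- Branching-mechanism bound for the squared norm: if each `γ_i ∈ [0, C_γ]` and
each offspring law `(p_{i,k})_k` has first moment at most `C¹`, then the double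
series `Σ_i γ_i Σ_k (‖𝔢^i_k(x) − 𝔢^i_k(y)‖² − ‖x−y‖²) p_{i,k}` is absolutely
convergent and bounded by `C_γ C¹ ‖x − y‖²`. -/
theorem branching_sq_bound (d m : ℕ) (hm : 1 ≤ m) (x y : Vec d m)
    (Cγ C1 : ℝ) (hCγ : 0 ≤ Cγ) (hC1 : 0 ≤ C1)
    (γ : Fin m → ℝ) (hγ : ∀ i, γ i ∈ Set.Icc (0 : ℝ) Cγ)
    (p : Fin m → ℕ → ℝ) (hp : ∀ i k, 0 ≤ p i k)
    (hp1 : ∀ i, HasSum (p i) 1)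
    (hmom : ∀ i, Summable (fun (k : ℕ) => (k : ℝ) * p i k))
    (hmom1 : ∀ i, ∑' (k : ℕ), (k : ℝ) * p i k ≤ C1) :
    (∀ i, Summable (fun k => |(‖dup i k x - dup i k y‖ ^ 2 - ‖x - y‖ ^ 2) * p i k|)) ∧
    ∑ i, γ i * ∑' k, (‖dup i k x - dup i k y‖ ^ 2 - ‖x - y‖ ^ 2) * p i k ≤
      Cγ * C1 * ‖x - y‖ ^ 2 :=
  branching_sq_bound_general d m x y Cγ C1 γ hγ p hp hp1 hmom hmom1
end
end

section
/- Let m ≥ 1 and x ∈ (ℝ^d)^m. Suppose that for each index i ∈ {1,…,m} we are given γ_i ∈ [0, C_γ] and nonnegative reals (p_{i,k})_{k≥0} with Σ_{k≥0} p_{i,k} = 1, Σ_{k≥1} k p_{i,k} ≤ C¹, and Σ_{k≥1} k(k−1) p_{i,k} ≤ C². Then the double series is absolutely convergent and Σ_{i=1}^m γ_i Σ_{k≥0} ( ‖𝔢^i_k(x)‖³ − ‖x‖³ ) p_{i,k} ≤ (3/2) C_γ ( (C¹/2) √m + C² ) ‖x‖³. -/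
noncomputable section

/-!
Since `𝔢^i_k x` lists `x_i` exactly `k` times and every other block once,
`‖𝔢^i_k x‖² = ‖x‖² + (k - 1)‖x_i‖²`. Hence `‖x‖ ≤ ‖𝔢^i_k x‖ ≤ k‖x‖` for `k ≥ 1`, while deletion
(`k = 0`) does not increase the norm. Together with `v³ - u³ ≤ (3/2) v (v² - u²)` for
`0 ≤ u ≤ v` this gives `‖𝔢^i_k x‖³ - ‖x‖³ ≤ (3/2) k(k-1) ‖x_i‖² ‖x‖` for every `k`. Averaging
against `p_{i,·}` and summing over `i` with `∑ᵢ ‖x_i‖² = ‖x‖²` bounds the double sum by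
`(3/2) C_γ C² ‖x‖³`, which is already at most the claimed bound.
-/

open Finset

def dupIndex (i k n : ℕ) : ℕ := if n < i then n else if n < i + k then i else n - k + 1

lemma dupIndex_lt {i m : ℕ} (hi : i < m) (k : ℕ) {n : ℕ} (hn : n < m - 1 + k) :
    dupIndex i k n < m := by
  unfold dupIndex; split_ifs <;> omega

lemma sum_range_comp_dupIndex {M : Type*} [AddCommMonoid M] (f : ℕ → M) {i m : ℕ} (hi : i < m)
    (k : ℕ) : ∑ n ∈ range (m - 1 + k), f (dupIndex i k n) + f i = ∑ n ∈ range m, f n + k • f i := by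
  obtain ⟨r, rfl⟩ : ∃ r, m = i + (1 + r) := ⟨m - i - 1, by omega⟩
  have hlen : i + (1 + r) - 1 + k = i + (k + r) := by omega
  have hfirst : ∀ n ∈ range i, f (dupIndex i k n) = f n := fun n hn => by
    simp [dupIndex, mem_range.mp hn]
  have hmiddle : ∀ n ∈ range k, f (dupIndex i k (i + n)) = f i := fun n hn => by
    simp [dupIndex, mem_range.mp hn]
  have hlast : ∀ n ∈ range r, f (dupIndex i k (i + (k + n))) = f (i + (1 + n)) := fun n _ => by
    simp only [dupIndex]; rw [if_neg (by omega), if_neg (by omega)]; congr 1; omega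
  rw [hlen, sum_range_add, sum_range_add, sum_range_add, sum_range_add, sum_congr rfl hfirst,
    sum_congr rfl hmiddle, sum_congr rfl hlast, sum_const, card_range]
  simp only [sum_range_one, add_zero]
  abel

lemma dup_apply {d m : ℕ} (i : Fin m) (k : ℕ) (x : Vec d m) (j : Fin (m - 1 + k)) :
    dup i k x j = x ⟨dupIndex i k j, dupIndex_lt i.isLt k j.isLt⟩ := by
  simp only [dup, dupIndex, WithLp.ofLp_toLp]; split_ifs <;> rfl

lemma norm_dup_sq {d m : ℕ} (i : Fin m) (k : ℕ) (x : Vec d m) :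
    ‖dup i k x‖ ^ 2 = ‖x‖ ^ 2 + ((k : ℝ) - 1) * ‖x i‖ ^ 2 := by
  let b : ℕ → ℝ := fun n => if h : n < m then ‖x ⟨n, h⟩‖ ^ 2 else 0
  have hb : ∀ j : Fin m, b j = ‖x j‖ ^ 2 := fun j => dif_pos j.isLt
  have hdup : ‖dup i k x‖ ^ 2 = ∑ n ∈ range (m - 1 + k), b (dupIndex i k n) := by
    rw [PiLp.norm_sq_eq_of_L2, ← Fin.sum_univ_eq_sum_range (fun n => b (dupIndex i k n))]
    exact sum_congr rfl fun j _ => by rw [dup_apply]; exact (hb _).symm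
  have hx : ‖x‖ ^ 2 = ∑ n ∈ range m, b n := by
    rw [PiLp.norm_sq_eq_of_L2, ← Fin.sum_univ_eq_sum_range]
    exact sum_congr rfl fun j _ => (hb j).symm
  have := sum_range_comp_dupIndex b i.isLt k
  rw [← hdup, ← hx, hb, nsmul_eq_mul] at this
  linarith

lemma cube_sub_cube_le {u v : ℝ} (hu : 0 ≤ u) (huv : u ≤ v) :
    v ^ 3 - u ^ 3 ≤ 3 / 2 * v * (v ^ 2 - u ^ 2) := by
  nlinarith [mul_nonneg (sq_nonneg (v - u)) (by linarith : 0 ≤ v + 2 * u)]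

lemma norm_dup_cube_sub_le {d m : ℕ} (i : Fin m) (k : ℕ) (x : Vec d m) :
    ‖dup i k x‖ ^ 3 - ‖x‖ ^ 3 ≤ 3 / 2 * ((k : ℝ) * (k - 1)) * ‖x i‖ ^ 2 * ‖x‖ := by
  have hsq := norm_dup_sq i k x
  have hxi : ‖x i‖ ^ 2 ≤ ‖x‖ ^ 2 := pow_le_pow_left₀ (norm_nonneg _) (PiLp.norm_apply_le x i) 2
  rcases Nat.eq_zero_or_pos k with rfl | hk
  · have : ‖dup i 0 x‖ ≤ ‖x‖ :=
      (sq_le_sq₀ (norm_nonneg _) (norm_nonneg _)).mp (by rw [hsq]; push_cast; nlinarith)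
    have : ‖dup i 0 x‖ ^ 3 ≤ ‖x‖ ^ 3 := pow_le_pow_left₀ (norm_nonneg _) this 3
    push_cast
    linarith
  · have hk : (1 : ℝ) ≤ k := by exact_mod_cast hk
    have hlower : ‖x‖ ≤ ‖dup i k x‖ :=
      (sq_le_sq₀ (norm_nonneg _) (norm_nonneg _)).mp (by rw [hsq]; nlinarith)
    have hupper : ‖dup i k x‖ ≤ k * ‖x‖ :=
      (sq_le_sq₀ (norm_nonneg _) (by positivity)).mp (by
        rw [hsq]; nlinarith [mul_le_mul_of_nonneg_left hxi (by linarith : (0 : ℝ) ≤ k - 1)])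
    have hgap : 0 ≤ ((k : ℝ) - 1) * ‖x i‖ ^ 2 := mul_nonneg (by linarith) (sq_nonneg _)
    calc ‖dup i k x‖ ^ 3 - ‖x‖ ^ 3
        ≤ 3 / 2 * ‖dup i k x‖ * (‖dup i k x‖ ^ 2 - ‖x‖ ^ 2) :=
          cube_sub_cube_le (norm_nonneg _) hlower
      _ = 3 / 2 * ‖dup i k x‖ * ((k - 1) * ‖x i‖ ^ 2) := by rw [hsq]; ring
      _ ≤ 3 / 2 * (k * ‖x‖) * ((k - 1) * ‖x i‖ ^ 2) := by gcongr
      _ = 3 / 2 * ((k : ℝ) * (k - 1)) * ‖x i‖ ^ 2 * ‖x‖ := by ring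

lemma abs_norm_dup_cube_sub_le {d m : ℕ} (i : Fin m) (k : ℕ) (x : Vec d m) :
    |‖dup i k x‖ ^ 3 - ‖x‖ ^ 3| ≤ ‖x‖ ^ 3 + 3 / 2 * ((k : ℝ) * (k - 1)) * ‖x i‖ ^ 2 * ‖x‖ := by
  have hk : 0 ≤ (k : ℝ) * (k - 1) := by
    rcases k with _ | k
    · simp
    · rw [Nat.cast_succ, add_sub_cancel_right]; positivity
  have : 0 ≤ 3 / 2 * ((k : ℝ) * (k - 1)) * ‖x i‖ ^ 2 * ‖x‖ := by positivity
  rw [abs_le]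
  constructor
  · linarith [pow_nonneg (norm_nonneg (dup i k x)) 3]
  · linarith [norm_dup_cube_sub_le i k x, pow_nonneg (norm_nonneg x) 3]

section OffspringLaw

variable {d m : ℕ} (i : Fin m) (x : Vec d m) {p : ℕ → ℝ}

lemma summable_abs_norm_dup_cube_sub_mul (hp : ∀ k, 0 ≤ p k) (hsum : Summable p)
    (hmom : Summable fun k : ℕ => (k : ℝ) * (k - 1) * p k) :
    Summable fun k => |(‖dup i k x‖ ^ 3 - ‖x‖ ^ 3) * p k| := by
  refine .of_nonneg_of_le (fun k => abs_nonneg _) (fun k => ?_)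
    ((hsum.mul_left (‖x‖ ^ 3)).add (hmom.mul_left (3 / 2 * ‖x i‖ ^ 2 * ‖x‖)))
  rw [abs_mul, abs_of_nonneg (hp k)]
  calc |‖dup i k x‖ ^ 3 - ‖x‖ ^ 3| * p k
      ≤ (‖x‖ ^ 3 + 3 / 2 * ((k : ℝ) * (k - 1)) * ‖x i‖ ^ 2 * ‖x‖) * p k :=
        mul_le_mul_of_nonneg_right (abs_norm_dup_cube_sub_le i k x) (hp k)
    _ = _ := by ring

lemma tsum_norm_dup_cube_sub_mul_le (hp : ∀ k, 0 ≤ p k) (hsum : Summable p)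
    (hmom : Summable fun k : ℕ => (k : ℝ) * (k - 1) * p k) {C : ℝ}
    (hC : ∑' k : ℕ, (k : ℝ) * (k - 1) * p k ≤ C) :
    ∑' k, (‖dup i k x‖ ^ 3 - ‖x‖ ^ 3) * p k ≤ 3 / 2 * C * ‖x i‖ ^ 2 * ‖x‖ := by
  have hle : ∀ k : ℕ, (‖dup i k x‖ ^ 3 - ‖x‖ ^ 3) * p k
      ≤ 3 / 2 * ‖x i‖ ^ 2 * ‖x‖ * ((k : ℝ) * (k - 1) * p k) := fun k => by
    nlinarith [mul_le_mul_of_nonneg_right (norm_dup_cube_sub_le i k x) (hp k)]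
  calc ∑' k, (‖dup i k x‖ ^ 3 - ‖x‖ ^ 3) * p k
      ≤ ∑' k : ℕ, 3 / 2 * ‖x i‖ ^ 2 * ‖x‖ * ((k : ℝ) * (k - 1) * p k) :=
        (summable_abs_norm_dup_cube_sub_mul i x hp hsum hmom).of_abs.tsum_le_tsum hle
          (hmom.mul_left _)
    _ = 3 / 2 * ‖x i‖ ^ 2 * ‖x‖ * ∑' k : ℕ, (k : ℝ) * (k - 1) * p k := tsum_mul_left
    _ ≤ 3 / 2 * ‖x i‖ ^ 2 * ‖x‖ * C := by gcongr
    _ = 3 / 2 * C * ‖x i‖ ^ 2 * ‖x‖ := by ring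

end OffspringLaw

theorem branching_cube_bound_general (d m : ℕ) (x : Vec d m)
    (Cγ C1 C2 : ℝ) (hCγ : 0 ≤ Cγ) (hC1 : 0 ≤ C1) (hC2 : 0 ≤ C2)
    (γ : Fin m → ℝ) (hγ : ∀ i, γ i ∈ Set.Icc (0 : ℝ) Cγ)
    (p : Fin m → ℕ → ℝ) (hp : ∀ i k, 0 ≤ p i k)
    (hp1 : ∀ i, HasSum (p i) 1)
    (hmom' : ∀ i, Summable (fun (k : ℕ) => (k : ℝ) * ((k : ℝ) - 1) * p i k))
    (hmom2 : ∀ i, ∑' (k : ℕ), (k : ℝ) * ((k : ℝ) - 1) * p i k ≤ C2) :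
    (∀ i, Summable (fun k => |(‖dup i k x‖ ^ 3 - ‖x‖ ^ 3) * p i k|)) ∧
    ∑ i, γ i * ∑' k, (‖dup i k x‖ ^ 3 - ‖x‖ ^ 3) * p i k ≤
      (3 / 2 : ℝ) * Cγ * ((C1 / 2) * Real.sqrt m + C2) * ‖x‖ ^ 3 := by
  refine ⟨fun i => summable_abs_norm_dup_cube_sub_mul i x (hp i) (hp1 i).summable (hmom' i), ?_⟩
  have hterm (i : Fin m) : γ i * ∑' k, (‖dup i k x‖ ^ 3 - ‖x‖ ^ 3) * p i k
      ≤ Cγ * (3 / 2 * C2 * ‖x i‖ ^ 2 * ‖x‖) :=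
    (mul_le_mul_of_nonneg_left
      (tsum_norm_dup_cube_sub_mul_le i x (hp i) (hp1 i).summable (hmom' i) (hmom2 i))
      (hγ i).1).trans (mul_le_mul_of_nonneg_right (hγ i).2 (by positivity))
  calc ∑ i, γ i * ∑' k, (‖dup i k x‖ ^ 3 - ‖x‖ ^ 3) * p i k
      ≤ ∑ i, Cγ * (3 / 2 * C2 * ‖x i‖ ^ 2 * ‖x‖) := sum_le_sum fun i _ => hterm i
    _ = 3 / 2 * Cγ * C2 * ‖x‖ ^ 3 := by
      simp_rw [mul_assoc, ← mul_sum, ← sum_mul, ← PiLp.norm_sq_eq_of_L2]; ring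
    _ ≤ 3 / 2 * Cγ * (C1 / 2 * Real.sqrt m + C2) * ‖x‖ ^ 3 := by
      gcongr; exact le_add_of_nonneg_left (by positivity)

/-- Branching-mechanism bound for the cubed norm: if each `γ_i ∈ [0, C_γ]` and each
offspring law `(p_{i,k})_k` has first moment at most `C¹` and factorial second
moment at most `C²`, then the double series
`Σ_i γ_i Σ_k (‖𝔢^i_k(x)‖³ − ‖x‖³) p_{i,k}` is absolutely convergent and bounded by
`(3/2) C_γ ((C¹/2)√m + C²) ‖x‖³`. -/
theorem branching_cube_bound (d m : ℕ) (hm : 1 ≤ m) (x : Vec d m)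
    (Cγ C1 C2 : ℝ) (hCγ : 0 ≤ Cγ) (hC1 : 0 ≤ C1) (hC2 : 0 ≤ C2)
    (γ : Fin m → ℝ) (hγ : ∀ i, γ i ∈ Set.Icc (0 : ℝ) Cγ)
    (p : Fin m → ℕ → ℝ) (hp : ∀ i k, 0 ≤ p i k)
    (hp1 : ∀ i, HasSum (p i) 1)
    (hmom : ∀ i, Summable (fun (k : ℕ) => (k : ℝ) * p i k))
    (hmom1 : ∀ i, ∑' (k : ℕ), (k : ℝ) * p i k ≤ C1)
    (hmom' : ∀ i, Summable (fun (k : ℕ) => (k : ℝ) * ((k : ℝ) - 1) * p i k))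
    (hmom2 : ∀ i, ∑' (k : ℕ), (k : ℝ) * ((k : ℝ) - 1) * p i k ≤ C2) :
    (∀ i, Summable (fun k => |(‖dup i k x‖ ^ 3 - ‖x‖ ^ 3) * p i k|)) ∧
    ∑ i, γ i * ∑' k, (‖dup i k x‖ ^ 3 - ‖x‖ ^ 3) * p i k ≤
      (3 / 2 : ℝ) * Cγ * ((C1 / 2) * Real.sqrt m + C2) * ‖x‖ ^ 3 :=
  branching_cube_bound_general d m x Cγ C1 C2 hCγ hC1 hC2 γ hγ p hp hp1 hmom' hmom2
end
end
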